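/- Let G be a connected signed graph, X its set of negative edges, T a spanning tree of G − X, and let G' = T ∪ X with the inherited signature. Let X', B', S' be, respectively, the negative edges of G', the bridges of G' separating two unbalanced subgraphs, and the edges of G' contained in a 2-edge-cut together with a negative edge; define X, B, S analogously on G. Then X' = X, B' ⊇ B, and S' ⊇ S. -/

import Mathlib

open Finset
open scoped Classical

noncomputable section

namespace SignedCircuitCover

variable {V E : Type} [Fintype V] [Fintype E] [DecidableEq V] [DecidableEq E]

/-- `e` is a loop. -/
def IsLoop (ends : E → Sym2 V) (e : E) : Prop := (ends e).IsDiag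

/-- The vertices incident with an edge of `F`. -/
def support (ends : E → Sym2 V) (F : Finset E) : Finset V :=
  Finset.univ.filter fun v => ∃ e ∈ F, v ∈ ends e

/-- Degree of `v` in the subgraph with edge set `F` (a loop counts twice). -/
def degree (ends : E → Sym2 V) (F : Finset E) (v : V) : ℕ :=
  ∑ e ∈ F, (if ends e = Sym2.diag v then 2 else if v ∈ ends e then 1 else 0)

/-- Reachability inside the edge set `F`. -/
def Reach (ends : E → Sym2 V) (F : Finset E) : V → V → Prop :=
  Relation.ReflTransGen fun a b => ∃ e ∈ F, ends e = s(a, b)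

/-- The subgraph with edge set `F` is connected. -/
def ConnectedOn (ends : E → Sym2 V) (F : Finset E) : Prop :=
  ∀ u ∈ support ends F, ∀ v ∈ support ends F, Reach ends F u v

/-- The whole graph is connected. -/
def Connected (ends : E → Sym2 V) : Prop :=
  ∀ u v : V, Reach ends (Finset.univ : Finset E) u v

/-- `F` is the edge set of a circuit (connected, 2-regular; a loop is a circuit). -/
def IsCircuit (ends : E → Sym2 V) (F : Finset E) : Prop :=
  F.Nonempty ∧ ConnectedOn ends F ∧ ∀ v ∈ support ends F, degree ends F v = 2

/-- `F` is the edge set of an Eulerian subgraph (connected, all degrees even). -/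
def IsEulerianOn (ends : E → Sym2 V) (F : Finset E) : Prop :=
  ConnectedOn ends F ∧ ∀ v ∈ support ends F, Even (degree ends F v)

/-- Negative edges of `F` (`sgn e = true` means `e` is negative). -/
def negEdges (sgn : E → Bool) (F : Finset E) : Finset E := F.filter fun e => sgn e = true

def IsBalancedCircuit (ends : E → Sym2 V) (sgn : E → Bool) (F : Finset E) : Prop :=
  IsCircuit ends F ∧ Even (negEdges sgn F).card

def IsUnbalancedCircuit (ends : E → Sym2 V) (sgn : E → Bool) (F : Finset E) : Prop :=
  IsCircuit ends F ∧ Odd (negEdges sgn F).card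

/-- `P` is the edge set of a path with (distinct) end-vertices `u` and `v`. -/
def IsPath (ends : E → Sym2 V) (P : Finset E) (u v : V) : Prop :=
  P.Nonempty ∧ ConnectedOn ends P ∧ u ≠ v ∧
    u ∈ support ends P ∧ v ∈ support ends P ∧
    degree ends P u = 1 ∧ degree ends P v = 1 ∧
    ∀ w ∈ support ends P, w ≠ u → w ≠ v → degree ends P w = 2

/-- A short barbell: two unbalanced circuits meeting at exactly one vertex. -/
def IsShortBarbell (ends : E → Sym2 V) (sgn : E → Bool) (F : Finset E) : Prop :=
  ∃ C₁ C₂ : Finset E, Disjoint C₁ C₂ ∧ F = C₁ ∪ C₂ ∧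
    IsUnbalancedCircuit ends sgn C₁ ∧ IsUnbalancedCircuit ends sgn C₂ ∧
    ∃ v : V, support ends C₁ ∩ support ends C₂ = {v}

/-- A long barbell: two disjoint unbalanced circuits joined by a path meeting
them only at its end-vertices. -/
def IsLongBarbell (ends : E → Sym2 V) (sgn : E → Bool) (F : Finset E) : Prop :=
  ∃ (C₁ C₂ P : Finset E) (u v : V),
    Disjoint C₁ C₂ ∧ Disjoint C₁ P ∧ Disjoint C₂ P ∧ F = C₁ ∪ C₂ ∪ P ∧
    IsUnbalancedCircuit ends sgn C₁ ∧ IsUnbalancedCircuit ends sgn C₂ ∧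
    Disjoint (support ends C₁) (support ends C₂) ∧
    IsPath ends P u v ∧
    support ends P ∩ support ends C₁ = {u} ∧
    support ends P ∩ support ends C₂ = {v}

def IsBarbell (ends : E → Sym2 V) (sgn : E → Bool) (F : Finset E) : Prop :=
  IsShortBarbell ends sgn F ∨ IsLongBarbell ends sgn F

/-- A signed circuit: a balanced circuit, a short barbell or a long barbell. -/
def IsSignedCircuit (ends : E → Sym2 V) (sgn : E → Bool) (F : Finset E) : Prop :=
  IsBalancedCircuit ends sgn F ∨ IsShortBarbell ends sgn F ∨ IsLongBarbell ends sgn F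

/-- `e` is a bridge (cut-edge) of the subgraph with edge set `F`. -/
def IsBridgeIn (ends : E → Sym2 V) (F : Finset E) (e : E) : Prop :=
  e ∈ F ∧ ∀ a b : V, ends e = s(a, b) → ¬ Reach ends (F.erase e) a b

/-- The bridges of the whole graph. -/
def bridges (ends : E → Sym2 V) : Finset E :=
  Finset.univ.filter fun e => IsBridgeIn ends Finset.univ e

/-- The non-bridge edges of the whole graph. -/
def nonbridges (ends : E → Sym2 V) : Finset E := Finset.univ \ bridges ends

/-- Reachability inside `F` avoiding the vertex `x`. -/
def ReachAvoid (ends : E → Sym2 V) (F : Finset E) (x : V) : V → V → Prop :=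
  Relation.ReflTransGen fun a b => a ≠ x ∧ b ≠ x ∧ ∃ e ∈ F, ends e = s(a, b)

/-- `x` is a cut-vertex of the subgraph with edge set `F`. -/
def IsCutVertexOn (ends : E → Sym2 V) (F : Finset E) (x : V) : Prop :=
  ∃ a ∈ support ends F, ∃ b ∈ support ends F,
    a ≠ x ∧ b ≠ x ∧ Reach ends F a b ∧ ¬ ReachAvoid ends F x a b

/-- The subgraph with edge set `F` is 2-connected (connected and without cut-vertices). -/
def TwoConnectedOn (ends : E → Sym2 V) (F : Finset E) : Prop :=
  ConnectedOn ends F ∧ ∀ x : V, ¬ IsCutVertexOn ends F x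

/-- The whole graph is 2-connected. -/
def TwoConnected (ends : E → Sym2 V) : Prop :=
  Connected ends ∧ ∀ x : V, ¬ IsCutVertexOn ends (Finset.univ : Finset E) x

/-- Total length of a collection of subgraphs. -/
def totalLength (𝒞 : List (Finset E)) : ℕ := (𝒞.map Finset.card).sum

/-- The width of the edge `e` with respect to the collection `𝒞`. -/
def widthAt (𝒞 : List (Finset E)) (e : E) : ℕ := (𝒞.filter fun C => e ∈ C).length

/-- `𝒞` covers every edge of the graph. -/
def CoversAll (𝒞 : List (Finset E)) : Prop := ∀ e : E, ∃ C ∈ 𝒞, e ∈ C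

/-- A tree of Eulerian graphs: connected, and after deleting all bridges every
component is Eulerian (equivalently all degrees in the bridgeless part are even). -/
def IsTreeOfEulerian (ends : E → Sym2 V) : Prop :=
  Connected ends ∧ ∀ v : V, Even (degree ends (nonbridges ends) v)

/-- Non-bridge non-loop edges. -/
def nbnl (ends : E → Sym2 V) : Finset E :=
  (nonbridges ends).filter fun e => ¬ IsLoop ends e

/-- A tree of circuits: connected, and after deleting all bridges and loops every
vertex has degree 0 or 2 (each component is an isolated vertex or a circuit). -/
def IsTreeOfCircuits (ends : E → Sym2 V) : Prop :=
  Connected ends ∧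
    ∀ v : V, degree ends (nbnl ends) v = 0 ∨ degree ends (nbnl ends) v = 2

/-- The balloon containing `v`: the edge set of the component of `v` in the
graph of non-bridge non-loop edges. -/
def compBalloon (ends : E → Sym2 V) (v : V) : Finset E :=
  (nbnl ends).filter fun e => ∃ w ∈ ends e, Reach ends (nbnl ends) v w

/-- Valency of the balloon of `v`: the number of bridges and loops incident
with its component. -/
def balloonValency (ends : E → Sym2 V) (v : V) : ℕ :=
  (Finset.univ.filter fun e =>
    (IsBridgeIn ends Finset.univ e ∨ IsLoop ends e) ∧
      ∃ w ∈ ends e, Reach ends (nbnl ends) v w).card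

/-- A balloon consisting of a single negative loop. -/
def IsNegLoopBalloon (ends : E → Sym2 V) (sgn : E → Bool) (B : Finset E) : Prop :=
  ∃ e : E, IsLoop ends e ∧ sgn e = true ∧ B = {e}

/-- A leaf balloon: a negative loop, or a nontrivial balloon of valency 1. -/
def IsLeafBalloon (ends : E → Sym2 V) (sgn : E → Bool) (B : Finset E) : Prop :=
  IsNegLoopBalloon ends sgn B ∨
    ∃ v : V, B = compBalloon ends v ∧ B.Nonempty ∧ balloonValency ends v = 1

/-- A leaf circuit: a negative loop, or a balloon of valency 1 which is a circuit. -/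
def IsLeafCircuit (ends : E → Sym2 V) (sgn : E → Bool) (B : Finset E) : Prop :=
  IsNegLoopBalloon ends sgn B ∨
    ∃ v : V, B = compBalloon ends v ∧ IsCircuit ends B ∧ balloonValency ends v = 1

/-- An inner circuit: a balloon of valency at least 2 which is a circuit. -/
def IsInnerCircuit (ends : E → Sym2 V) (B : Finset E) : Prop :=
  ∃ v : V, B = compBalloon ends v ∧ IsCircuit ends B ∧ 2 ≤ balloonValency ends v

/-- Number of unbalanced circuits of a tree of circuits: negative loops together
with the unbalanced (nontrivial) balloons. -/
def numUnbalancedCircuits (ends : E → Sym2 V) (sgn : E → Bool) : ℕ :=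
  (Finset.univ.filter fun e : E => IsLoop ends e ∧ sgn e = true).card +
    Set.ncard {B : Finset E |
      (∃ v : V, B = compBalloon ends v) ∧ B.Nonempty ∧ Odd (negEdges sgn B).card}

/-- Flow-admissibility: every edge lies in a signed circuit (Bouchet). -/
def FlowAdmissible (ends : E → Sym2 V) (sgn : E → Bool) : Prop :=
  ∀ e : E, ∃ C : Finset E, IsSignedCircuit ends sgn C ∧ e ∈ C

/-- `e` has exactly one end-vertex in `U`. -/
def crosses (ends : E → Sym2 V) (U : Finset V) (e : E) : Prop :=
  ∃ a b : V, ends e = s(a, b) ∧ ((a ∈ U ∧ b ∉ U) ∨ (a ∉ U ∧ b ∈ U))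

/-- Switching the signature at the vertex set `U`. -/
def switch (ends : E → Sym2 V) (U : Finset V) (sgn : E → Bool) : E → Bool :=
  fun e => if crosses ends U e then ! (sgn e) else sgn e

/-- The number of negative edges of a signature. -/
def negCount (sgn : E → Bool) : ℕ := (Finset.univ.filter fun e => sgn e = true).card

/-- `sgn` is a minimum signature: no equivalent (switched) signature has fewer
negative edges. -/
def IsMinSignature (ends : E → Sym2 V) (sgn : E → Bool) : Prop :=
  ∀ U : Finset V, negCount sgn ≤ negCount (switch ends U sgn)

/-- `{e₁, e₂}` is a 2-edge-cut of the subgraph with edge set `F`. -/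
def IsTwoEdgeCut (ends : E → Sym2 V) (F : Finset E) (e₁ e₂ : E) : Prop :=
  e₁ ≠ e₂ ∧ e₁ ∈ F ∧ e₂ ∈ F ∧ ¬ IsBridgeIn ends F e₁ ∧ ¬ IsBridgeIn ends F e₂ ∧
    (∀ a b : V, ends e₁ = s(a, b) → ¬ Reach ends ((F.erase e₁).erase e₂) a b) ∧
    (∀ a b : V, ends e₂ = s(a, b) → ¬ Reach ends ((F.erase e₁).erase e₂) a b)

/-- `b` is a bridge of `F` whose removal leaves two parts which are both unbalanced. -/
def SeparatesUnbalanced (ends : E → Sym2 V) (sgn : E → Bool) (F : Finset E) (b : E) : Prop :=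
  IsBridgeIn ends F b ∧
    ∀ a c : V, ends b = s(a, c) →
      (∃ C ⊆ F.erase b, IsUnbalancedCircuit ends sgn C ∧
        ∃ w ∈ support ends C, Reach ends (F.erase b) a w) ∧
      (∃ C ⊆ F.erase b, IsUnbalancedCircuit ends sgn C ∧
        ∃ w ∈ support ends C, Reach ends (F.erase b) c w)

/-- `T` is a spanning tree of the whole graph: spanning, connected and acyclic. -/
def IsSpanningTree (ends : E → Sym2 V) (T : Finset E) : Prop :=
  (∀ u v : V, Reach ends T u v) ∧ ∀ C ⊆ T, ¬ IsCircuit ends C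

/-! ### Auxiliary lemmas -/

section Aux

variable (ends : E → Sym2 V)

lemma reach_mono' {F F' : Finset E} (h : F ⊆ F') {u v : V} (hr : Reach ends F u v) :
    Reach ends F' u v :=
  Relation.ReflTransGen.mono (fun a b hab => by
    obtain ⟨e, he, hee⟩ := hab; exact ⟨e, h he, hee⟩) _ _ hr

lemma reach_symm' {F : Finset E} {u v : V} (hr : Reach ends F u v) : Reach ends F v u := by
  have hs : Symmetric fun a b => ∃ e ∈ F, ends e = s(a, b) := by
    rintro a b ⟨e, he, hee⟩; exact ⟨e, he, hee.trans Sym2.eq_swap⟩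
  haveI : Std.Symm (fun a b => ∃ e ∈ F, ends e = s(a, b)) := ⟨fun a b h => hs h⟩
  exact Std.Symm.symm (r := Relation.ReflTransGen (fun a b => ∃ e ∈ F, ends e = s(a, b))) _ _ hr

lemma reach_closed' {F : Finset E} {u v : V} (S : Set V)
    (hcl : ∀ a b, a ∈ S → (∃ e ∈ F, ends e = s(a, b)) → b ∈ S)
    (hu : u ∈ S) (hr : Reach ends F u v) : v ∈ S := by
  induction hr with
  | refl => exact hu
  | tail _ hstep ih => exact hcl _ _ ih hstep

lemma mem_support_iff' {F : Finset E} {v : V} :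
    v ∈ support ends F ↔ ∃ e ∈ F, v ∈ ends e := by
  simp [support]

lemma reach_mem_support' {F : Finset E} {u v : V} (hu : u ∈ support ends F)
    (hr : Reach ends F u v) : v ∈ support ends F := by
  refine reach_closed' ends {x | x ∈ support ends F} ?_ hu hr
  rintro a b _ ⟨e, he, hee⟩
  exact (mem_support_iff' ends).mpr ⟨e, he, hee ▸ Sym2.mem_mk_right a b⟩

/-- Contribution of a single edge to the degree. -/
def contrib (v : V) (e : E) : ℕ :=
  if ends e = Sym2.diag v then 2 else if v ∈ ends e then 1 else 0

lemma degree_eq_sum_contrib (F : Finset E) (v : V) :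
    degree ends F v = ∑ e ∈ F, contrib ends v e := rfl

lemma contrib_ne_zero_iff {v : V} {e : E} : contrib ends v e ≠ 0 ↔ v ∈ ends e := by
  unfold contrib
  split_ifs with h1 h2
  · simp only [ne_eq, OfNat.ofNat_ne_zero, not_false_eq_true, true_iff]
    rw [h1]; exact Sym2.mem_mk_left v v
  · simp [h2]
  · simp [h2]

lemma one_le_contrib {v : V} {e : E} (h : v ∈ ends e) : 1 ≤ contrib ends v e :=
  Nat.one_le_iff_ne_zero.mpr ((contrib_ne_zero_iff ends).mpr h)

lemma contrib_eq_zero {v : V} {e : E} (h : v ∉ ends e) : contrib ends v e = 0 := by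
  by_contra hc; exact h ((contrib_ne_zero_iff ends).mp hc)

lemma contrib_eq_one {v w : V} {e : E} (h : ends e = s(v, w)) (hne : v ≠ w) :
    contrib ends v e = 1 := by
  unfold contrib
  rw [h]
  rw [if_neg, if_pos (Sym2.mem_mk_left v w)]
  intro hd
  have hd' : s(v, w) = s(v, v) := hd
  rcases Sym2.eq_iff.mp hd' with ⟨_, h2⟩ | ⟨_, h2⟩ <;> exact hne h2.symm

lemma contrib_eq_two {v : V} {e : E} (h : ends e = s(v, v)) : contrib ends v e = 2 := by
  unfold contrib
  have h' : ends e = Sym2.diag v := h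
  rw [if_pos h']

lemma degree_insert' {F : Finset E} {e : E} (he : e ∉ F) (v : V) :
    degree ends (insert e F) v = contrib ends v e + degree ends F v := by
  rw [degree_eq_sum_contrib, degree_eq_sum_contrib, Finset.sum_insert he]

lemma degree_erase' {F : Finset E} {e : E} (he : e ∈ F) (v : V) :
    degree ends F v = contrib ends v e + degree ends (F.erase e) v := by
  conv_lhs => rw [← Finset.insert_erase he]
  exact degree_insert' ends (Finset.notMem_erase e F) v

lemma degree_ne_zero_iff {F : Finset E} {v : V} :
    degree ends F v ≠ 0 ↔ v ∈ support ends F := by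
  rw [degree_eq_sum_contrib, mem_support_iff']
  constructor
  · intro h
    by_contra hc; push_neg at hc
    exact h (Finset.sum_eq_zero fun e he => contrib_eq_zero ends (hc e he))
  · rintro ⟨e, he, hv⟩ h0
    have h1 := one_le_contrib ends hv
    have h2 : contrib ends v e ≤ ∑ x ∈ F, contrib ends v x :=
      Finset.single_le_sum (fun _ _ => Nat.zero_le _) he
    omega

lemma contrib_le_degree {F : Finset E} {e : E} (he : e ∈ F) (v : V) :
    contrib ends v e ≤ degree ends F v := by
  rw [degree_eq_sum_contrib]
  exact Finset.single_le_sum (fun _ _ => Nat.zero_le _) he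

lemma two_le_degree {F : Finset E} {e₁ e₂ : E} {v : V} (h₁ : e₁ ∈ F) (h₂ : e₂ ∈ F)
    (hne : e₁ ≠ e₂) (hv₁ : v ∈ ends e₁) (hv₂ : v ∈ ends e₂) : 2 ≤ degree ends F v := by
  have h2' : e₂ ∈ F.erase e₁ := Finset.mem_erase.mpr ⟨Ne.symm hne, h₂⟩
  have := contrib_le_degree ends h2' v
  have := one_le_contrib ends hv₁
  have := one_le_contrib ends hv₂
  have := degree_erase' ends h₁ v
  omega

/-- Walk decomposition with respect to a distinguished edge `b`. -/
lemma reach_erase_or {F : Finset E} {b : E} {p q u v : V} (hb : ends b = s(p, q))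
    (hr : Reach ends F u v) :
    Reach ends (F.erase b) u v ∨
      (Reach ends (F.erase b) u p ∧ Reach ends (F.erase b) q v) ∨
      (Reach ends (F.erase b) u q ∧ Reach ends (F.erase b) p v) := by
  induction hr with
  | refl => exact Or.inl Relation.ReflTransGen.refl
  | @tail c v huc hstep ih =>
    obtain ⟨e, heF, hee⟩ := hstep
    by_cases heb : e = b
    · subst heb
      rw [hb] at hee
      rcases Sym2.eq_iff.mp hee.symm with ⟨hc, hv⟩ | ⟨hc, hv⟩
      · -- c = p, v = q
        subst hc; subst hv
        rcases ih with h | ⟨h1, _⟩ | ⟨h1, _⟩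
        · exact Or.inr (Or.inl ⟨h, Relation.ReflTransGen.refl⟩)
        · exact Or.inr (Or.inl ⟨h1, Relation.ReflTransGen.refl⟩)
        · exact Or.inl h1
      · -- c = q, v = p
        subst hc; subst hv
        rcases ih with h | ⟨h1, _⟩ | ⟨h1, _⟩
        · exact Or.inr (Or.inr ⟨h, Relation.ReflTransGen.refl⟩)
        · exact Or.inl h1
        · exact Or.inr (Or.inr ⟨h1, Relation.ReflTransGen.refl⟩)
    · have hstep' : ∃ e' ∈ F.erase b, ends e' = s(c, v) :=
        ⟨e, Finset.mem_erase.mpr ⟨heb, heF⟩, hee⟩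
      rcases ih with h | ⟨h1, h2⟩ | ⟨h1, h2⟩
      · exact Or.inl (h.tail hstep')
      · exact Or.inr (Or.inl ⟨h1, h2.tail hstep'⟩)
      · exact Or.inr (Or.inr ⟨h1, h2.tail hstep'⟩)

lemma mem_support_insert' {F : Finset E} {e : E} {z : V} :
    z ∈ support ends (insert e F) ↔ z ∈ ends e ∨ z ∈ support ends F := by
  rw [mem_support_iff', mem_support_iff']
  constructor
  · rintro ⟨e', he', hz⟩
    rcases Finset.mem_insert.mp he' with h | h
    · exact Or.inl (h ▸ hz)
    · exact Or.inr ⟨e', h, hz⟩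
  · rintro (h | ⟨e', he', hz⟩)
    · exact ⟨e, Finset.mem_insert_self e F, h⟩
    · exact ⟨e', Finset.mem_insert_of_mem he', hz⟩

lemma isPath_single {e : E} {u v : V} (he : ends e = s(u, v)) (hne : u ≠ v) :
    IsPath ends {e} u v := by
  have hmem : ∀ z, z ∈ support ends ({e} : Finset E) ↔ z = u ∨ z = v := by
    intro z
    rw [mem_support_iff']
    simp [he, Sym2.mem_iff]
  have hu : u ∈ support ends {e} := (hmem u).mpr (Or.inl rfl)
  have hv : v ∈ support ends {e} := (hmem v).mpr (Or.inr rfl)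
  have hstep : Reach ends {e} u v :=
    Relation.ReflTransGen.single ⟨e, Finset.mem_singleton_self e, he⟩
  refine ⟨Finset.singleton_nonempty e, ?_, hne, hu, hv, ?_, ?_, ?_⟩
  · intro z1 h1 z2 h2
    rcases (hmem z1).mp h1 with h | h <;> rcases (hmem z2).mp h2 with h' | h' <;>
      subst h <;> subst h'
    · exact Relation.ReflTransGen.refl
    · exact hstep
    · exact reach_symm' ends hstep
    · exact Relation.ReflTransGen.refl
  · rw [degree_eq_sum_contrib, Finset.sum_singleton, contrib_eq_one ends he hne]
  · rw [degree_eq_sum_contrib, Finset.sum_singleton,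
      contrib_eq_one ends (he.trans Sym2.eq_swap) (Ne.symm hne)]
  · intro w hw hwu hwv
    rcases (hmem w).mp hw with h | h
    · exact absurd h hwu
    · exact absurd h hwv

lemma isPath_insert_pendant {P : Finset E} {e : E} {u w v : V}
    (hP : IsPath ends P w v) (he : ends e = s(u, w)) (hu : u ∉ support ends P)
    (huv : u ≠ v) : IsPath ends (insert e P) u v := by
  obtain ⟨hPne, hPconn, hwv, hws, hvs, hdw, hdv, hint⟩ := hP
  have huw : u ≠ w := fun h => hu (h ▸ hws)
  have heP : e ∉ P := fun h =>
    hu ((mem_support_iff' ends).mpr ⟨e, h, he ▸ Sym2.mem_mk_left u w⟩)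
  have hus : u ∈ support ends (insert e P) :=
    (mem_support_insert' ends).mpr (Or.inl (he ▸ Sym2.mem_mk_left u w))
  have hdegu0 : degree ends P u = 0 := by
    by_contra h; exact hu ((degree_ne_zero_iff ends).mp h)
  have hreach_w : ∀ z ∈ support ends (insert e P), Reach ends (insert e P) z w := by
    intro z hz
    rcases (mem_support_insert' ends).mp hz with h | h
    · rcases Sym2.mem_iff.mp (he ▸ h) with h' | h'
      · subst h'
        exact Relation.ReflTransGen.single ⟨e, Finset.mem_insert_self e P, he⟩
      · subst h'; exact Relation.ReflTransGen.refl
    · exact reach_mono' ends (Finset.subset_insert e P) (hPconn z h w hws)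
  have hcv : contrib ends v e = 0 := contrib_eq_zero ends (by
    rw [he, Sym2.mem_iff]; push_neg; exact ⟨Ne.symm huv, Ne.symm hwv⟩)
  refine ⟨Finset.insert_nonempty e P, ?_, huv, hus,
    (mem_support_insert' ends).mpr (Or.inr hvs), ?_, ?_, ?_⟩
  · intro z1 h1 z2 h2
    exact (hreach_w z1 h1).trans (reach_symm' ends (hreach_w z2 h2))
  · rw [degree_insert' ends heP, contrib_eq_one ends he huw, hdegu0]
  · rw [degree_insert' ends heP, hcv, hdv]
  · intro z hz hzu hzv
    by_cases hzw : z = w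
    · subst hzw
      rw [degree_insert' ends heP,
        contrib_eq_one ends (he.trans Sym2.eq_swap) (Ne.symm huw), hdw]
    · have hzP : z ∈ support ends P := by
        rcases (mem_support_insert' ends).mp hz with h | h
        · rcases Sym2.mem_iff.mp (he ▸ h) with h' | h'
          · exact absurd h' hzu
          · exact absurd h' hzw
        · exact h
      have hcz : contrib ends z e = 0 := contrib_eq_zero ends (by
        rw [he, Sym2.mem_iff]; push_neg; exact ⟨hzu, hzw⟩)
      rw [degree_insert' ends heP, hcz, hint z hzP hzw hzv]

lemma subpath : ∀ (n : ℕ) (P : Finset E) (w v u : V), P.card ≤ n → IsPath ends P w v →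
    u ∈ support ends P → u ≠ v → ∃ P' ⊆ P, IsPath ends P' u v := by
  intro n
  induction n with
  | zero =>
    intro P w v u hcard hP _ _
    rw [Nat.le_zero, Finset.card_eq_zero] at hcard
    exact absurd (hcard ▸ hP.1) (by simp)
  | succ n ih =>
    intro P w v u hcard hP hu huv
    by_cases huw : u = w
    · exact ⟨P, Finset.Subset.refl P, huw ▸ hP⟩
    obtain ⟨hPne, hPconn, hwv, hws, hvs, hdw, hdv, hint⟩ := hP
    obtain ⟨e₀, he₀P, hwe₀⟩ := (mem_support_iff' ends).mp hws
    obtain ⟨w', he₀⟩ := Sym2.mem_iff_exists.mp hwe₀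
    have hww' : w ≠ w' := by
      intro h
      have h2 : ends e₀ = s(w, w) := by rw [he₀, ← h]
      have := contrib_le_degree ends he₀P w
      rw [contrib_eq_two ends h2, hdw] at this
      omega
    have huniq : ∀ e₁ ∈ P, w ∈ ends e₁ → e₁ = e₀ := by
      intro e₁ h₁ hw₁
      by_contra hne
      have := two_le_degree ends h₁ he₀P hne hw₁ hwe₀
      omega
    by_cases hw'v : w' = v
    · exfalso
      have he₀v : ends e₀ = s(w, v) := by rw [he₀, hw'v]
      have hvuniq : ∀ e₁ ∈ P, v ∈ ends e₁ → e₁ = e₀ := by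
        intro e₁ h₁ hv₁
        by_contra hne
        have := two_le_degree ends h₁ he₀P hne hv₁ (he₀v ▸ Sym2.mem_mk_right w v)
        omega
      have hclosed : ∀ a b, a ∈ ({w, v} : Set V) → (∃ e ∈ P, ends e = s(a, b)) →
          b ∈ ({w, v} : Set V) := by
        rintro a b ha ⟨e, heP, hee⟩
        have hae : a ∈ ends e := hee ▸ Sym2.mem_mk_left a b
        have he' : e = e₀ := by
          rcases ha with ha | ha
          · exact huniq e heP (ha ▸ hae)
          · exact hvuniq e heP (ha ▸ hae)
        have hbe : b ∈ ends e₀ := he' ▸ (hee ▸ Sym2.mem_mk_right a b)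
        rw [he₀v, Sym2.mem_iff] at hbe
        rcases hbe with h | h
        · exact Or.inl h
        · exact Or.inr h
      have := reach_closed' ends {w, v} hclosed (Or.inl rfl) (hPconn w hws u hu)
      rcases this with h | h
      · exact huw h
      · exact huv h
    · have hQsub : (P.erase e₀) ⊆ P := Finset.erase_subset e₀ P
      have hw'P : w' ∈ support ends P :=
        (mem_support_iff' ends).mpr ⟨e₀, he₀P, he₀ ▸ Sym2.mem_mk_right w w'⟩
      have hdPw' : degree ends P w' = 2 := hint w' hw'P (Ne.symm hww') hw'v
      have hcontw' : contrib ends w' e₀ = 1 :=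
        contrib_eq_one ends (he₀.trans Sym2.eq_swap) (Ne.symm hww')
      have hde' := degree_erase' ends he₀P w'
      have hdQw' : degree ends (P.erase e₀) w' = 1 := by omega
      have hwQ : w ∉ support ends (P.erase e₀) := by
        intro h
        obtain ⟨e₁, h₁, h₂⟩ := (mem_support_iff' ends).mp h
        exact (Finset.mem_erase.mp h₁).1 (huniq e₁ (hQsub h₁) h₂)
      have hcontv : contrib ends v e₀ = 0 := contrib_eq_zero ends (by
        rw [he₀, Sym2.mem_iff]; push_neg
        exact ⟨Ne.symm hwv, fun h => hw'v h.symm⟩)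
      have hdev := degree_erase' ends he₀P v
      have hdQv : degree ends (P.erase e₀) v = 1 := by omega
      have hvQ : v ∈ support ends (P.erase e₀) := (degree_ne_zero_iff ends).mp (by omega)
      have hw'Q : w' ∈ support ends (P.erase e₀) := (degree_ne_zero_iff ends).mp (by omega)
      have hQint : ∀ z ∈ support ends (P.erase e₀), z ≠ w' → z ≠ v → degree ends (P.erase e₀) z = 2 := by
        intro z hzQ hzw' hzv
        obtain ⟨ez, hez, hzez⟩ := (mem_support_iff' ends).mp hzQ
        have hzP : z ∈ support ends P := (mem_support_iff' ends).mpr ⟨ez, hQsub hez, hzez⟩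
        have hzw : z ≠ w := fun h => hwQ (h ▸ hzQ)
        have hcz : contrib ends z e₀ = 0 := contrib_eq_zero ends (by
          rw [he₀, Sym2.mem_iff]; push_neg; exact ⟨hzw, hzw'⟩)
        have h1 := degree_erase' ends he₀P z
        have h2 := hint z hzP hzw hzv
        omega
      have hQconn : ConnectedOn ends (P.erase e₀) := by
        intro z1 h1 z2 h2
        have hz1P : z1 ∈ support ends P := by
          obtain ⟨e, he, hz⟩ := (mem_support_iff' ends).mp h1
          exact (mem_support_iff' ends).mpr ⟨e, hQsub he, hz⟩
        have hz2P : z2 ∈ support ends P := by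
          obtain ⟨e, he, hz⟩ := (mem_support_iff' ends).mp h2
          exact (mem_support_iff' ends).mpr ⟨e, hQsub he, hz⟩
        rcases reach_erase_or ends he₀ (hPconn z1 hz1P z2 hz2P) with h | ⟨ha, hb⟩ | ⟨ha, hb⟩
        · exact h
        · exact absurd (reach_mem_support' ends h1 ha) hwQ
        · exact absurd (reach_mem_support' ends h2 (reach_symm' ends hb)) hwQ
      have hQne : (P.erase e₀).Nonempty := by
        obtain ⟨e, he, _⟩ := (mem_support_iff' ends).mp hvQ
        exact ⟨e, he⟩
      have hQpath : IsPath ends (P.erase e₀) w' v :=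
        ⟨hQne, hQconn, hw'v, hw'Q, hvQ, hdQw', hdQv, hQint⟩
      have huQ : u ∈ support ends (P.erase e₀) := by
        by_cases huw' : u = w'
        · exact huw' ▸ hw'Q
        · have hcu : contrib ends u e₀ = 0 := contrib_eq_zero ends (by
            rw [he₀, Sym2.mem_iff]; push_neg; exact ⟨huw, huw'⟩)
          have hdu : degree ends P u = 2 := hint u hu huw huv
          have h1 := degree_erase' ends he₀P u
          exact (degree_ne_zero_iff ends).mp (by omega)
      have hQcard : (P.erase e₀).card ≤ n := by
        have h1 := Finset.card_erase_of_mem he₀P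
        have h2 : 1 ≤ P.card := Finset.card_pos.mpr hPne
        omega
      obtain ⟨P', hP'Q, hP'⟩ := ih (P.erase e₀) w' v u hQcard hQpath huQ huv
      exact ⟨P', hP'Q.trans hQsub, hP'⟩

lemma exists_path_of_reach {F : Finset E} {v : V} :
    ∀ {u : V}, Reach ends F u v → u ≠ v → ∃ P ⊆ F, IsPath ends P u v := by
  have main : ∀ {u : V}, Reach ends F u v → u = v ∨ ∃ P ⊆ F, IsPath ends P u v := by
    intro u hr
    induction hr using Relation.ReflTransGen.head_induction_on with
    | refl => exact Or.inl rfl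
    | @head a c hstep _ ih =>
      obtain ⟨e, heF, hee⟩ := hstep
      by_cases hav : a = v
      · exact Or.inl hav
      refine Or.inr ?_
      rcases ih with hcv | ⟨P, hPF, hP⟩
      · subst hcv
        exact ⟨{e}, Finset.singleton_subset_iff.mpr heF, isPath_single ends hee hav⟩
      · by_cases hac : a = c
        · exact ⟨P, hPF, hac ▸ hP⟩
        · by_cases haP : a ∈ support ends P
          · obtain ⟨P', hP'P, hP'⟩ := subpath ends P.card P c v a le_rfl hP haP hav
            exact ⟨P', hP'P.trans hPF, hP'⟩
          · exact ⟨insert e P, Finset.insert_subset_iff.mpr ⟨heF, hPF⟩,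
              isPath_insert_pendant ends hP hee haP hav⟩
  intro u hr hne
  rcases main hr with h | h
  · exact absurd h hne
  · exact h

lemma isCircuit_loop {x : E} {u : V} (hx : ends x = s(u, u)) :
    IsCircuit ends {x} := by
  have hmem : ∀ z, z ∈ support ends ({x} : Finset E) ↔ z = u := by
    intro z; rw [mem_support_iff']; simp [hx]
  refine ⟨Finset.singleton_nonempty x, ?_, ?_⟩
  · intro z1 h1 z2 h2
    rw [hmem z1] at h1; rw [hmem z2] at h2; subst h1; subst h2
    exact Relation.ReflTransGen.refl
  · intro z hz
    rw [hmem z] at hz; subst hz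
    rw [degree_eq_sum_contrib, Finset.sum_singleton, contrib_eq_two ends hx]

lemma isCircuit_insert_path {P : Finset E} {x : E} {u v : V}
    (hP : IsPath ends P u v) (hx : ends x = s(u, v)) (hxP : x ∉ P) :
    IsCircuit ends (insert x P) := by
  obtain ⟨hPne, hPconn, huv, hus, hvs, hdu, hdv, hint⟩ := hP
  have hsupp : ∀ z, z ∈ support ends (insert x P) ↔ z ∈ support ends P := by
    intro z
    rw [mem_support_insert' ends]
    constructor
    · rintro (h | h)
      · rcases Sym2.mem_iff.mp (hx ▸ h) with h' | h'
        · exact h' ▸ hus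
        · exact h' ▸ hvs
      · exact h
    · exact Or.inr
  refine ⟨Finset.insert_nonempty x P, ?_, ?_⟩
  · intro z1 h1 z2 h2
    exact reach_mono' ends (Finset.subset_insert x P)
      (hPconn z1 ((hsupp z1).mp h1) z2 ((hsupp z2).mp h2))
  · intro z hz
    rw [hsupp z] at hz
    by_cases hzu : z = u
    · subst hzu
      rw [degree_insert' ends hxP, contrib_eq_one ends hx huv, hdu]
    · by_cases hzv : z = v
      · subst hzv
        rw [degree_insert' ends hxP,
          contrib_eq_one ends (hx.trans Sym2.eq_swap) (Ne.symm huv), hdv]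
      · have hcz : contrib ends z x = 0 := contrib_eq_zero ends (by
          rw [hx, Sym2.mem_iff]; push_neg; exact ⟨hzu, hzv⟩)
        rw [degree_insert' ends hxP, hcz, hint z hz hzu hzv]


end Aux

/-- With `G' = T ∪ X` for a spanning tree `T` of `G − X`:
`X' = X`, `B' ⊇ B`, `S' ⊇ S`. -/
theorem statement11 {V E : Type} [Fintype V] [Fintype E] [DecidableEq V] [DecidableEq E]
    (ends : E → Sym2 V) (sgn : E → Bool)
    (hconn : Connected ends)
    (hmin : IsMinSignature ends sgn)
    (T : Finset E)
    (hTpos : ∀ e ∈ T, sgn e = false)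
    (hTtree : IsSpanningTree ends T)
    (X G' : Finset E)
    (hX : X = Finset.univ.filter fun e => sgn e = true)
    (hG' : G' = T ∪ X) :
    (G'.filter fun e => sgn e = true) = X ∧
    (Finset.univ.filter fun b => SeparatesUnbalanced ends sgn Finset.univ b) ⊆
      (G'.filter fun b => SeparatesUnbalanced ends sgn G' b) ∧
    (Finset.univ.filter fun e => ∃ t ∈ X, IsTwoEdgeCut ends Finset.univ e t) ⊆
      (G'.filter fun e => ∃ t ∈ X, IsTwoEdgeCut ends G' e t) := by
  have hXsub : X ⊆ G' := by rw [hG']; exact Finset.subset_union_right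
  have hTsub : T ⊆ G' := by rw [hG']; exact Finset.subset_union_left
  refine ⟨?_, ?_, ?_⟩
  · -- X' = X
    ext e
    rw [hG', hX]
    simp only [Finset.mem_filter, Finset.mem_union, Finset.mem_univ, true_and]
    constructor
    · rintro ⟨_, h⟩; exact h
    · intro h
      exact ⟨Or.inr h, h⟩
  · -- B ⊆ B'
    intro b hb
    rw [Finset.mem_filter] at hb
    obtain ⟨-, ⟨-, hbbr⟩, hsides⟩ := hb
    obtain ⟨p, q, hpq⟩ : ∃ p q, ends b = s(p, q) := by
      induction ends b using Sym2.inductionOn with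
      | _ p q => exact ⟨p, q, rfl⟩
    have hbT : b ∈ T := by
      by_contra hbT
      have hsub : T ⊆ Finset.univ.erase b := fun z hz =>
        Finset.mem_erase.mpr ⟨fun h => hbT (h ▸ hz), Finset.mem_univ z⟩
      exact hbbr p q hpq (reach_mono' ends hsub (hTtree.1 p q))
    have hbG' : b ∈ G' := hTsub hbT
    have hTbsub : T.erase b ⊆ G'.erase b := Finset.erase_subset_erase b hTsub
    have hbnr : ¬ Reach ends (Finset.univ.erase b) p q := hbbr p q hpq
    have hTsubU : T.erase b ⊆ Finset.univ.erase b :=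
      Finset.erase_subset_erase b (Finset.subset_univ T)
    have key : ∀ a z : V, Reach ends (Finset.univ.erase b) a z →
        Reach ends (T.erase b) a z := by
      intro a z hz
      rcases reach_erase_or ends hpq (hTtree.1 a z) with h | ⟨h1, h2⟩ | ⟨h1, h2⟩
      · exact h
      · exact absurd (((reach_symm' ends (reach_mono' ends hTsubU h1)).trans hz).trans
          (reach_symm' ends (reach_mono' ends hTsubU h2))) hbnr
      · exact absurd (((reach_mono' ends hTsubU h2).trans (reach_symm' ends hz)).trans
          (reach_mono' ends hTsubU h1)) hbnr
    have lift : ∀ a : V,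
        (∃ C ⊆ Finset.univ.erase b, IsUnbalancedCircuit ends sgn C ∧
          ∃ w ∈ support ends C, Reach ends (Finset.univ.erase b) a w) →
        ∃ C ⊆ G'.erase b, IsUnbalancedCircuit ends sgn C ∧
          ∃ w ∈ support ends C, Reach ends (G'.erase b) a w := by
      rintro a ⟨C, hCsub, ⟨hCc, hCodd⟩, w, hw, haw⟩
      obtain ⟨hCne, hCconn, hCdeg⟩ := hCc
      have hnegne : (negEdges sgn C).Nonempty := by
        rw [← Finset.card_pos]
        rcases hCodd with ⟨k, hk⟩; omega
      obtain ⟨x, hxneg⟩ := hnegne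
      rw [negEdges, Finset.mem_filter] at hxneg
      obtain ⟨hxC, hxs⟩ := hxneg
      obtain ⟨u, v, hxe⟩ : ∃ u v, ends x = s(u, v) := by
        induction ends x using Sym2.inductionOn with
        | _ u v => exact ⟨u, v, rfl⟩
      have hxX : x ∈ X := by rw [hX]; simp [hxs]
      have hxb : x ≠ b := (Finset.mem_erase.mp (hCsub hxC)).1
      have hxG' : x ∈ G'.erase b := Finset.mem_erase.mpr ⟨hxb, hXsub hxX⟩
      have hu_supp : u ∈ support ends C :=
        (mem_support_iff' ends).mpr ⟨x, hxC, hxe ▸ Sym2.mem_mk_left u v⟩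
      have hv_supp : v ∈ support ends C :=
        (mem_support_iff' ends).mpr ⟨x, hxC, hxe ▸ Sym2.mem_mk_right u v⟩
      have hCU : ∀ z ∈ support ends C, Reach ends (Finset.univ.erase b) a z := by
        intro z hz
        exact haw.trans (reach_mono' ends hCsub (hCconn w hw z hz))
      have hau : Reach ends (T.erase b) a u := key a u (hCU u hu_supp)
      have hav : Reach ends (T.erase b) a v := key a v (hCU v hv_supp)
      have huvT : Reach ends (T.erase b) u v := (reach_symm' ends hau).trans hav
      by_cases huv : u = v
      · refine ⟨{x}, Finset.singleton_subset_iff.mpr hxG',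
          ⟨isCircuit_loop ends (huv ▸ hxe), ?_⟩, u, ?_, ?_⟩
        · have hneg : negEdges sgn {x} = {x} := by
            rw [negEdges]; ext e
            simp only [Finset.mem_filter, Finset.mem_singleton]
            exact ⟨fun h => h.1, fun h => ⟨h, h ▸ hxs⟩⟩
          rw [hneg, Finset.card_singleton]; exact odd_one
        · exact (mem_support_iff' ends).mpr
            ⟨x, Finset.mem_singleton_self x, hxe ▸ Sym2.mem_mk_left u v⟩
        · exact reach_mono' ends hTbsub hau
      · obtain ⟨P, hPsub, hPpath⟩ := exists_path_of_reach ends huvT huv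
        have hxP : x ∉ P := fun h => by
          have := hTpos x (Finset.erase_subset b T (hPsub h))
          simp [this] at hxs
        refine ⟨insert x P, Finset.insert_subset_iff.mpr ⟨hxG', hPsub.trans hTbsub⟩,
          ⟨isCircuit_insert_path ends hPpath hxe hxP, ?_⟩, u, ?_, ?_⟩
        · have hneg : negEdges sgn (insert x P) = {x} := by
            rw [negEdges]
            ext e
            simp only [Finset.mem_filter, Finset.mem_insert, Finset.mem_singleton]
            constructor
            · rintro ⟨h | h, hs⟩
              · exact h
              · exact absurd hs (by simp [hTpos e (Finset.erase_subset b T (hPsub h))])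
            · rintro rfl; exact ⟨Or.inl rfl, hxs⟩
          rw [hneg, Finset.card_singleton]; exact odd_one
        · exact (mem_support_iff' ends).mpr
            ⟨x, Finset.mem_insert_self x P, hxe ▸ Sym2.mem_mk_left u v⟩
        · exact reach_mono' ends hTbsub hau
    rw [Finset.mem_filter]
    refine ⟨hbG', ⟨hbG', fun a c h hr => hbbr a c h
      (reach_mono' ends (Finset.erase_subset_erase b (Finset.subset_univ G')) hr)⟩, ?_⟩
    intro a c h
    obtain ⟨hsa, hsc⟩ := hsides a c h
    exact ⟨lift a hsa, lift c hsc⟩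
  · -- S ⊆ S'
    intro e he
    rw [Finset.mem_filter] at he
    obtain ⟨-, t, htX, hcut⟩ := he
    obtain ⟨hent, -, -, hnbe, hnbt, hcute, hcutt⟩ := hcut
    have hts : sgn t = true := by rw [hX] at htX; exact (Finset.mem_filter.mp htX).2
    have htT : t ∉ T := fun h => by simp [hTpos t h] at hts
    have htG' : t ∈ G' := hXsub htX
    obtain ⟨a, c, hee⟩ : ∃ a c, ends e = s(a, c) := by
      induction ends e using Sym2.inductionOn with
      | _ a c => exact ⟨a, c, rfl⟩
    obtain ⟨p, q, hte⟩ : ∃ p q, ends t = s(p, q) := by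
      induction ends t using Sym2.inductionOn with
      | _ p q => exact ⟨p, q, rfl⟩
    have heG' : e ∈ G' := by
      by_contra heG'
      have heT : e ∉ T := fun h => heG' (hTsub h)
      have hsub : T ⊆ (Finset.univ.erase e).erase t := by
        intro z hz
        exact Finset.mem_erase.mpr ⟨fun h => htT (h ▸ hz),
          Finset.mem_erase.mpr ⟨fun h => heT (h ▸ hz), Finset.mem_univ z⟩⟩
      exact hcute a c hee (reach_mono' ends hsub (hTtree.1 a c))
    have hreach : Reach ends (G'.erase e) a c := by
      by_cases heT : e ∈ T
      · by_contra hno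
        have hAC : Reach ends (Finset.univ.erase e) a c := by
          have h1 := hnbe
          rw [IsBridgeIn, not_and] at h1
          have h2 := h1 (Finset.mem_univ e)
          push_neg at h2
          obtain ⟨a', c', h', hr⟩ := h2
          rcases Sym2.eq_iff.mp (hee.symm.trans h') with ⟨ha, hc⟩ | ⟨ha, hc⟩
          · rw [← ha, ← hc] at hr; exact hr
          · rw [← ha, ← hc] at hr; exact reach_symm' ends hr
        have hnosplit : ¬ Reach ends ((Finset.univ.erase e).erase t) a c := hcute a c hee
        have hside : ∀ z : V, Reach ends (T.erase e) z a ∨ Reach ends (T.erase e) z c := by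
          intro z
          rcases reach_erase_or ends hee (hTtree.1 z a) with h | ⟨h1, h2⟩ | ⟨h1, h2⟩
          · exact Or.inl h
          · exact Or.inl h1
          · exact Or.inr h1
        have hTe : T.erase e ⊆ G'.erase e := Finset.erase_subset_erase e hTsub
        have hTeU2 : T.erase e ⊆ (Finset.univ.erase e).erase t := by
          intro z hz
          obtain ⟨hze, hzT⟩ := Finset.mem_erase.mp hz
          exact Finset.mem_erase.mpr ⟨fun h => htT (h ▸ hzT),
            Finset.mem_erase.mpr ⟨hze, Finset.mem_univ z⟩⟩
        have htG'e : t ∈ G'.erase e := Finset.mem_erase.mpr ⟨fun h => hent h.symm, htG'⟩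
        have hstep_pq : Reach ends (G'.erase e) p q :=
          Relation.ReflTransGen.single ⟨t, htG'e, hte⟩
        rcases hside p with hp | hp <;> rcases hside q with hq | hq
        · rcases reach_erase_or ends hte hAC with h | ⟨h1, h2⟩ | ⟨h1, h2⟩
          · exact hnosplit h
          · exact hnosplit ((reach_symm' ends (reach_mono' ends hTeU2 hq)).trans h2)
          · exact hnosplit ((reach_symm' ends (reach_mono' ends hTeU2 hp)).trans h2)
        · exact hno (((reach_symm' ends (reach_mono' ends hTe hp)).trans hstep_pq).trans
            (reach_mono' ends hTe hq))
        · exact hno (((reach_symm' ends (reach_mono' ends hTe hq)).trans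
            (reach_symm' ends hstep_pq)).trans (reach_mono' ends hTe hp))
        · rcases reach_erase_or ends hte hAC with h | ⟨h1, h2⟩ | ⟨h1, h2⟩
          · exact hnosplit h
          · exact hnosplit (h1.trans (reach_mono' ends hTeU2 hp))
          · exact hnosplit (h1.trans (reach_mono' ends hTeU2 hq))
      · have hsub : T ⊆ G'.erase e := fun z hz =>
          Finset.mem_erase.mpr ⟨fun h => heT (h ▸ hz), hTsub hz⟩
        exact reach_mono' ends hsub (hTtree.1 a c)
    rw [Finset.mem_filter]
    refine ⟨heG', t, htX, hent, heG', htG', ?_, ?_, ?_, ?_⟩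
    · rintro ⟨-, hall⟩
      exact hall a c hee hreach
    · rintro ⟨-, hall⟩
      have hsub : T ⊆ G'.erase t := fun z hz =>
        Finset.mem_erase.mpr ⟨fun h => htT (h ▸ hz), hTsub hz⟩
      exact hall p q hte (reach_mono' ends hsub (hTtree.1 p q))
    · intro a' c' h' hr
      exact hcute a' c' h' (reach_mono' ends (Finset.erase_subset_erase t
        (Finset.erase_subset_erase e (Finset.subset_univ G'))) hr)
    · intro a' c' h' hr
      exact hcutt a' c' h' (reach_mono' ends (Finset.erase_subset_erase t
        (Finset.erase_subset_erase e (Finset.subset_univ G'))) hr)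

end SignedCircuitCover
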